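/- Let $X$ be a Banach space and $f : [a,b] \to X$ differentiable with Bochner-integrable derivative. Then $\left\| \int_a^b f(t)\,dt - (b-a)\cdot\frac{f(a)+f(b)}{2} \right\| \le \frac{1}{2}(b-a)\int_a^b \|f'(t)\|\,dt$. -/

import Mathlib

/-! Integrating by parts against the kernel `t - (a + b) / 2`, whose derivative is `1` and whose
values at `b` and `a` are `± (b - a) / 2`, turns the trapezoidal error into
`-∫ (t - (a + b) / 2) • f' t`; the kernel is bounded by `(b - a) / 2` on `[a, b]`. -/

open MeasureTheory intervalIntegral

theorem integral_sub_trapezoid_eq_neg_integral_smul_deriv {E : Type*} [NormedAddCommGroup E]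
    [NormedSpace ℝ E] [CompleteSpace E] {a b : ℝ} {f f' : ℝ → E}
    (hderiv : ∀ t ∈ Set.uIcc a b, HasDerivAt f (f' t) t)
    (hint : IntervalIntegrable f' volume a b) :
    (∫ t in a..b, f t) - ((b - a) / 2) • (f a + f b) =
      -∫ t in a..b, (t - (a + b) / 2) • f' t := by
  have hkernel : ∀ t ∈ Set.uIcc a b, HasDerivAt (fun t : ℝ ↦ t - (a + b) / 2) 1 t :=
    fun t _ ↦ (hasDerivAt_id t).sub_const _
  rw [integral_smul_deriv_eq_deriv_smul hkernel hderiv intervalIntegrable_const hint]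
  simp only [one_smul]
  have hb : b - (a + b) / 2 = (b - a) / 2 := by ring
  have ha : a - (a + b) / 2 = -((b - a) / 2) := by ring
  rw [hb, ha, neg_smul, smul_add]
  abel

theorem norm_integral_smul_le_mul_integral_norm {E : Type*} [NormedAddCommGroup E]
    [NormedSpace ℝ E] {μ : Measure ℝ} {a b C : ℝ} {g : ℝ → ℝ} {f : ℝ → E} (hab : a ≤ b)
    (hg : ∀ t ∈ Set.Ioc a b, |g t| ≤ C) (hf : IntervalIntegrable f μ a b) :
    ‖∫ t in a..b, g t • f t ∂μ‖ ≤ C * ∫ t in a..b, ‖f t‖ ∂μ := by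
  rw [← intervalIntegral.integral_const_mul]
  refine norm_integral_le_of_norm_le hab (Filter.Eventually.of_forall fun t ht ↦ ?_)
    (hf.norm.const_mul C)
  rw [norm_smul, Real.norm_eq_abs]
  exact mul_le_mul_of_nonneg_right (hg t ht) (norm_nonneg _)

theorem stmt9 {X : Type*} [NormedAddCommGroup X] [NormedSpace ℝ X] [CompleteSpace X]
    {a b : ℝ} (hab : a < b) {f f' : ℝ → X}
    (hderiv : ∀ t ∈ Set.Icc a b, HasDerivAt f (f' t) t)
    (hint : IntervalIntegrable f' volume a b) :
    ‖(∫ t in a..b, f t) - ((b - a) / 2) • (f a + f b)‖ ≤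
      (1 / 2) * (b - a) * (∫ t in a..b, ‖f' t‖) := by
  rw [← Set.uIcc_of_le hab.le] at hderiv
  rw [integral_sub_trapezoid_eq_neg_integral_smul_deriv hderiv hint, norm_neg]
  have hkernel : ∀ t ∈ Set.Ioc a b, |t - (a + b) / 2| ≤ (b - a) / 2 := fun t ht ↦
    abs_le.mpr ⟨by linarith [ht.1], by linarith [ht.2]⟩
  calc ‖∫ t in a..b, (t - (a + b) / 2) • f' t‖ ≤ (b - a) / 2 * ∫ t in a..b, ‖f' t‖ :=
        norm_integral_smul_le_mul_integral_norm hab.le hkernel hint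
    _ = (1 / 2) * (b - a) * (∫ t in a..b, ‖f' t‖) := by ring
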